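/- Let τ ∈ (0,1), h > 0, let K : ℝ → ℝ be a continuous nonnegative kernel with ∫_{-∞}^{∞} K(t) dt = 1 and ζ₁ < ∞, and let (Z_i, Y_i) ∈ ℝ^p × ℝ, i = 1, …, n, be given data. Then the smoothed empirical quantile objective Q̂_h(θ) = (1/n) Σ_{i=1}^n ℓ_h(Y_i − ⟨Z_i, θ⟩) is twice differentiable on ℝ^p with Hessian ∇²Q̂_h(θ) = (1/(nh)) Σ_{i=1}^n K((⟨Z_i, θ⟩ − Y_i)/h) Z_i Z_iᵀ; this matrix is positive semidefinite for every θ, and consequently Q̂_h is a convex function on ℝ^p. -/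

import Mathlib

open MeasureTheory

/-- The quantile loss `ρ_τ(t) = t (τ - 1{t<0})`. -/
noncomputable def rho (τ t : ℝ) : ℝ := t * (τ - if t < 0 then 1 else 0)

/-- The convolution-smoothed quantile loss
`ℓ_h(r) = (1/h) ∫ ρ_τ(t) K((t - r)/h) dt`. -/
noncomputable def smoothedLoss (τ : ℝ) (K : ℝ → ℝ) (h r : ℝ) : ℝ :=
  (1 / h) * ∫ t, rho τ t * K ((t - r) / h)

/-- The smoothed empirical quantile objective
`Q̂_h(θ) = (1/n) ∑ᵢ ℓ_h(Y_i − ⟨Z_i, θ⟩)`. -/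
noncomputable def Qhat (τ : ℝ) (K : ℝ → ℝ) (h : ℝ) {p n : ℕ}
    (Z : Fin n → EuclideanSpace ℝ (Fin p)) (Y : Fin n → ℝ)
    (θ : EuclideanSpace ℝ (Fin p)) : ℝ :=
  (1 / (n : ℝ)) * ∑ i, smoothedLoss τ K h (Y i - (inner ℝ (Z i) θ : ℝ))

/-- The Hessian of `Q̂_h` at `θ`, as a continuous bilinear form:
`(1/(nh)) ∑ᵢ K((⟨Z_i, θ⟩ − Y_i)/h) Z_i Z_iᵀ`, acting as
`(v, w) ↦ (1/(nh)) ∑ᵢ K((⟨Z_i, θ⟩ − Y_i)/h) ⟨Z_i, v⟩ ⟨Z_i, w⟩`. -/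
noncomputable def hessQhat (K : ℝ → ℝ) (h : ℝ) {p n : ℕ}
    (Z : Fin n → EuclideanSpace ℝ (Fin p)) (Y : Fin n → ℝ)
    (θ : EuclideanSpace ℝ (Fin p)) :
    EuclideanSpace ℝ (Fin p) →L[ℝ] EuclideanSpace ℝ (Fin p) →L[ℝ] ℝ :=
  (1 / ((n : ℝ) * h)) •
    ∑ i, K (((inner ℝ (Z i) θ : ℝ) - Y i) / h) •
      ((innerSL ℝ (Z i)).smulRight (innerSL ℝ (Z i)))

/-! ### Auxiliary lemmas -/

lemma rho_eq (τ t : ℝ) : rho τ t = τ * t + max (-t) 0 := by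
  unfold rho
  rcases lt_or_ge t 0 with ht | ht
  · rw [if_pos ht, max_eq_left (by linarith)]; ring
  · rw [if_neg (not_lt.2 ht), max_eq_right (by linarith)]; ring

lemma rho_cont (τ : ℝ) : Continuous (rho τ) := by
  have : rho τ = fun t => τ * t + max (-t) 0 := funext (rho_eq τ)
  rw [this]
  exact (continuous_const.mul continuous_id).add (continuous_neg.max continuous_const)

lemma rho_lip {τ : ℝ} (hτ0 : 0 < τ) (hτ1 : τ < 1) (a b : ℝ) :
    |rho τ a - rho τ b| ≤ |a - b| := by
  unfold rho
  rcases abs_cases (a - b) with ⟨h1, h2⟩ | ⟨h1, h2⟩ <;>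
    rw [h1, abs_le] <;> constructor <;> split_ifs <;> nlinarith

lemma rho_convex {τ : ℝ} (hτ0 : 0 < τ) (hτ1 : τ < 1) {a b x y : ℝ}
    (ha : 0 ≤ a) (hb : 0 ≤ b) (hab : a + b = 1) :
    rho τ (a * x + b * y) ≤ a * rho τ x + b * rho τ y := by
  unfold rho
  split_ifs <;> nlinarith [mul_nonneg ha hb]

/-- The CDF of the kernel. -/
noncomputable def cdfK (K : ℝ → ℝ) (x : ℝ) : ℝ := ∫ t in Set.Iic x, K t

lemma hasDerivAt_cdfK {K : ℝ → ℝ} (hKcont : Continuous K) (hKi : Integrable K) (x : ℝ) :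
    HasDerivAt (cdfK K) (K x) x := by
  have heq : cdfK K = fun y => (∫ t in Set.Iic (0:ℝ), K t) + ∫ t in (0:ℝ)..y, K t := by
    funext y
    rw [← intervalIntegral.integral_Iic_sub_Iic hKi.integrableOn hKi.integrableOn]
    unfold cdfK; ring
  rw [heq]
  exact (intervalIntegral.integral_hasDerivAt_right hKi.intervalIntegrable
    (hKcont.stronglyMeasurable.stronglyMeasurableAtFilter) hKcont.continuousAt).const_add _

lemma smoothedLoss_eq {τ h : ℝ} {K : ℝ → ℝ} (hh : 0 < h) (r : ℝ) :
    smoothedLoss τ K h r = ∫ u, rho τ (r + h * u) * K u := by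
  unfold smoothedLoss
  have key := MeasureTheory.Measure.integral_comp_mul_left
    (fun x => rho τ (r + x) * K (((r + x) - r) / h)) h
  simp only [add_sub_cancel_left] at key
  have h1 : (fun u : ℝ => rho τ (r + h * u) * K ((h * u) / h)) =
      fun u : ℝ => rho τ (r + h * u) * K u := by
    funext u; rw [mul_div_cancel_left₀ _ hh.ne']
  rw [h1] at key
  have h2 : (∫ y : ℝ, rho τ (r + y) * K (y / h)) = ∫ t : ℝ, rho τ t * K ((t - r) / h) := by
    rw [← MeasureTheory.integral_add_left_eq_self (fun t => rho τ t * K ((t - r)/h)) r]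
    simp only [add_sub_cancel_left]
  rw [key, h2, abs_of_pos (inv_pos.2 hh), smul_eq_mul, one_div]

lemma integrable_rho_kernel {τ h : ℝ} {K : ℝ → ℝ} (hτ0 : 0 < τ) (hτ1 : τ < 1) (hh : 0 < h)
    (hKcont : Continuous K) (hKnonneg : ∀ t, 0 ≤ K t) (hKi : Integrable K)
    (hζ1 : Integrable (fun t => |t| * K t)) (r : ℝ) :
    Integrable (fun u => rho τ (r + h * u) * K u) := by
  have hm : AEStronglyMeasurable (fun u => rho τ (r + h * u) * K u) volume :=
    (((rho_cont τ).comp (continuous_const.add (continuous_const.mul continuous_id))).mul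
      hKcont).aestronglyMeasurable
  refine ((hKi.const_mul |r|).add (hζ1.const_mul h)).mono' hm ?_
  filter_upwards with u
  have h1 : ‖rho τ (r + h * u) * K u‖ = |rho τ (r + h * u)| * K u := by
    rw [norm_mul, Real.norm_eq_abs, Real.norm_eq_abs, abs_of_nonneg (hKnonneg u)]
  have h2 : |rho τ (r + h * u)| ≤ |r| + h * |u| := by
    have hl := rho_lip hτ0 hτ1 (r + h * u) 0
    have h0 : rho τ 0 = 0 := by simp [rho]
    rw [h0, sub_zero, sub_zero] at hl
    calc |rho τ (r + h * u)| ≤ |r + h * u| := hl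
      _ ≤ |r| + |h * u| := abs_add_le _ _
      _ = |r| + h * |u| := by rw [abs_mul, abs_of_pos hh]
  rw [h1]
  calc |rho τ (r + h * u)| * K u ≤ (|r| + h * |u|) * K u :=
        mul_le_mul_of_nonneg_right h2 (hKnonneg u)
    _ = |r| * K u + h * (|u| * K u) := by ring

lemma indicator_eq {h : ℝ} (hh : 0 < h) (K : ℝ → ℝ) (r : ℝ) :
    (fun u => (if r + h * u < 0 then (1:ℝ) else 0) * K u)
      = Set.indicator (Set.Iio (-r / h)) K := by
  funext u
  by_cases hu : u < -r / h
  · rw [Set.indicator_apply, if_pos (show u ∈ Set.Iio (-r / h) from hu), if_pos, one_mul]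
    rw [lt_div_iff₀ hh] at hu; nlinarith [hu]
  · rw [Set.indicator_apply, if_neg (show u ∉ Set.Iio (-r / h) from hu), if_neg, zero_mul]
    rw [not_lt, div_le_iff₀ hh] at hu; nlinarith [hu]

lemma hasDerivAt_smoothedLoss_aux {τ h : ℝ} {K : ℝ → ℝ} (hτ0 : 0 < τ) (hτ1 : τ < 1)
    (hh : 0 < h) (hKcont : Continuous K) (hKnonneg : ∀ t, 0 ≤ K t) (hKi : Integrable K)
    (hζ1 : Integrable (fun t => |t| * K t)) (hKint : ∫ t, K t = 1) (r : ℝ) :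
    HasDerivAt (fun x => ∫ u, rho τ (x + h * u) * K u) (τ - cdfK K (-r / h)) r := by
  have hF'eq : (fun u => (τ - if r + h * u < 0 then (1:ℝ) else 0) * K u)
      = fun u => τ * K u - Set.indicator (Set.Iio (-r / h)) K u := by
    funext u
    rw [← congrFun (indicator_eq hh K r) u]; ring
  have hF'meas : AEStronglyMeasurable
      (fun u => (τ - if r + h * u < 0 then (1:ℝ) else 0) * K u) volume := by
    rw [hF'eq]
    exact ((hKcont.aestronglyMeasurable.const_mul τ).sub
      ((hKcont.stronglyMeasurable.indicator measurableSet_Iio).aestronglyMeasurable))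
  have hnull : volume {u : ℝ | ¬ r + h * u ≠ 0} = 0 := by
    have hsub : {u : ℝ | ¬ r + h * u ≠ 0} ⊆ {-r / h} := by
      intro u hu
      simp only [Set.mem_setOf_eq, not_not] at hu
      simp only [Set.mem_singleton_iff]
      field_simp
      linarith
    exact measure_mono_null hsub (measure_singleton _)
  have hae : ∀ᵐ u : ℝ, r + h * u ≠ 0 := by
    rw [ae_iff]; exact hnull
  have main := hasDerivAt_integral_of_dominated_loc_of_lip (μ := volume)
      (F := fun x u => rho τ (x + h * u) * K u)
      (F' := fun u => (τ - if r + h * u < 0 then (1:ℝ) else 0) * K u)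
      (x₀ := r) (bound := K) (s := Metric.ball r 1) (Metric.ball_mem_nhds r one_pos)
      (Filter.Eventually.of_forall fun x =>
        (((rho_cont τ).comp (continuous_const.add (continuous_const.mul continuous_id))).mul
          hKcont).aestronglyMeasurable)
      (integrable_rho_kernel hτ0 hτ1 hh hKcont hKnonneg hKi hζ1 r)
      hF'meas
      (Filter.Eventually.of_forall fun u => by
        refine LipschitzOnWith.of_dist_le_mul fun x _ y _ => ?_
        rw [Real.dist_eq, Real.dist_eq, Real.coe_nnabs, abs_of_nonneg (hKnonneg u)]
        calc |rho τ (x + h * u) * K u - rho τ (y + h * u) * K u|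
            = |rho τ (x + h * u) - rho τ (y + h * u)| * K u := by
              rw [← sub_mul, abs_mul, abs_of_nonneg (hKnonneg u)]
          _ ≤ |x - y| * K u := by
              refine mul_le_mul_of_nonneg_right ?_ (hKnonneg u)
              calc |rho τ (x + h * u) - rho τ (y + h * u)| ≤ |(x + h * u) - (y + h * u)| :=
                    rho_lip hτ0 hτ1 _ _
                _ = |x - y| := by ring_nf
          _ = K u * |x - y| := mul_comm _ _)
      hKi
      (by
        filter_upwards [hae] with u hu
        rcases lt_or_gt_of_ne hu with hlt | hgt
        · rw [if_pos hlt]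
          have hev : ∀ᶠ x in nhds r, x + h * u < 0 :=
            ((continuous_id.add continuous_const).continuousAt (x := r)).eventually_lt
              continuousAt_const hlt
          have hbase : HasDerivAt (fun x : ℝ => ((τ - 1) * (x + h * u))) (τ - 1) r := by
            simpa using ((hasDerivAt_id r).add_const (h * u)).const_mul (τ - 1)
          have heq : (fun x : ℝ => rho τ (x + h * u)) =ᶠ[nhds r]
              fun x => (τ - 1) * (x + h * u) := by
            filter_upwards [hev] with x hx
            unfold rho; rw [if_pos hx]; ring
          exact ((hbase.congr_of_eventuallyEq heq).mul_const (K u))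
        · rw [if_neg (by linarith)]
          have hev : ∀ᶠ x in nhds r, 0 < x + h * u :=
            continuousAt_const.eventually_lt
              ((continuous_id.add continuous_const).continuousAt (x := r)) hgt
          have hbase : HasDerivAt (fun x : ℝ => (τ * (x + h * u))) τ r := by
            simpa using ((hasDerivAt_id r).add_const (h * u)).const_mul τ
          have heq : (fun x : ℝ => rho τ (x + h * u)) =ᶠ[nhds r]
              fun x => τ * (x + h * u) := by
            filter_upwards [hev] with x hx
            unfold rho; rw [if_neg (by linarith)]; ring
          have := (hbase.congr_of_eventuallyEq heq).mul_const (K u)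
          simpa using this)
  have hint := main.2
  have hval : (∫ u, (τ - if r + h * u < 0 then (1:ℝ) else 0) * K u) = τ - cdfK K (-r / h) := by
    rw [hF'eq, integral_sub (hKi.const_mul τ) (hKi.indicator measurableSet_Iio),
      integral_const_mul, hKint, mul_one, integral_indicator measurableSet_Iio,
      setIntegral_congr_set Iio_ae_eq_Iic]
    rfl
  rwa [hval] at hint

lemma hasDerivAt_smoothedLoss {τ h : ℝ} {K : ℝ → ℝ} (hτ0 : 0 < τ) (hτ1 : τ < 1)
    (hh : 0 < h) (hKcont : Continuous K) (hKnonneg : ∀ t, 0 ≤ K t) (hKi : Integrable K)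
    (hζ1 : Integrable (fun t => |t| * K t)) (hKint : ∫ t, K t = 1) (r : ℝ) :
    HasDerivAt (smoothedLoss τ K h) (τ - cdfK K (-r / h)) r := by
  have h1 : smoothedLoss τ K h = fun x => ∫ u, rho τ (x + h * u) * K u :=
    funext (smoothedLoss_eq hh)
  rw [h1]
  exact hasDerivAt_smoothedLoss_aux hτ0 hτ1 hh hKcont hKnonneg hKi hζ1 hKint r

/-- The gradient of `Q̂_h` as a continuous linear functional. -/
noncomputable def gradQhat (τ : ℝ) (K : ℝ → ℝ) (h : ℝ) {p n : ℕ}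
    (Z : Fin n → EuclideanSpace ℝ (Fin p)) (Y : Fin n → ℝ)
    (θ : EuclideanSpace ℝ (Fin p)) : EuclideanSpace ℝ (Fin p) →L[ℝ] ℝ :=
  (1 / (n : ℝ)) • ∑ i, (cdfK K (((inner ℝ (Z i) θ : ℝ) - Y i) / h) - τ) • innerSL ℝ (Z i)

lemma hasFDerivAt_Qhat {τ h : ℝ} {K : ℝ → ℝ} (hτ0 : 0 < τ) (hτ1 : τ < 1)
    (hh : 0 < h) (hKcont : Continuous K) (hKnonneg : ∀ t, 0 ≤ K t) (hKi : Integrable K)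
    (hζ1 : Integrable (fun t => |t| * K t)) (hKint : ∫ t, K t = 1)
    {p n : ℕ} (Z : Fin n → EuclideanSpace ℝ (Fin p)) (Y : Fin n → ℝ)
    (θ : EuclideanSpace ℝ (Fin p)) :
    HasFDerivAt (Qhat τ K h Z Y) (gradQhat τ K h Z Y θ) θ := by
  have hsum : HasFDerivAt
      (fun θ : EuclideanSpace ℝ (Fin p) =>
        ∑ i, smoothedLoss τ K h (Y i - (inner ℝ (Z i) θ : ℝ)))
      (∑ i, (cdfK K (((inner ℝ (Z i) θ : ℝ) - Y i) / h) - τ) • innerSL ℝ (Z i)) θ := by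
    refine HasFDerivAt.fun_sum fun i _ => ?_
    have haff : HasFDerivAt (fun θ : EuclideanSpace ℝ (Fin p) => Y i - (inner ℝ (Z i) θ : ℝ))
        (-(innerSL ℝ (Z i))) θ := by
      simpa using (hasFDerivAt_const (Y i) θ).fun_sub (innerSL ℝ (Z i)).hasFDerivAt
    have hl := hasDerivAt_smoothedLoss hτ0 hτ1 hh hKcont hKnonneg hKi hζ1 hKint
      (Y i - (inner ℝ (Z i) θ : ℝ))
    have hcomp := hl.comp_hasFDerivAt θ haff
    have hkey : (τ - cdfK K (-(Y i - (inner ℝ (Z i) θ : ℝ)) / h)) • (-(innerSL ℝ (Z i)))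
        = (cdfK K (((inner ℝ (Z i) θ : ℝ) - Y i) / h) - τ) • innerSL ℝ (Z i) := by
      rw [neg_sub, smul_neg, ← neg_smul, neg_sub]
    rw [← hkey]
    exact hcomp
  have hfinal := hsum.const_mul (1 / (n : ℝ))
  exact hfinal

lemma hess_eq {h : ℝ} {K : ℝ → ℝ} (hh : 0 < h) {p n : ℕ}
    (Z : Fin n → EuclideanSpace ℝ (Fin p)) (Y : Fin n → ℝ)
    (θ : EuclideanSpace ℝ (Fin p)) :
    (1 / (n : ℝ)) • ∑ i, ((K (((inner ℝ (Z i) θ : ℝ) - Y i) / h) / h) • innerSL ℝ (Z i)).smulRight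
        (innerSL ℝ (Z i)) = hessQhat K h Z Y θ := by
  unfold hessQhat
  refine ContinuousLinearMap.ext fun v => ContinuousLinearMap.ext fun w => ?_
  simp only [ContinuousLinearMap.smul_apply, ContinuousLinearMap.sum_apply,
    ContinuousLinearMap.smulRight_apply, ContinuousLinearMap.coe_smul', Pi.smul_apply,
    smul_eq_mul]
  rw [Finset.mul_sum, Finset.mul_sum]
  refine Finset.sum_congr rfl fun i _ => ?_
  field_simp

lemma hasFDerivAt_gradQhat {τ h : ℝ} {K : ℝ → ℝ}
    (hh : 0 < h) (hKcont : Continuous K) (hKi : Integrable K)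
    {p n : ℕ} (Z : Fin n → EuclideanSpace ℝ (Fin p)) (Y : Fin n → ℝ)
    (θ : EuclideanSpace ℝ (Fin p)) :
    HasFDerivAt (gradQhat τ K h Z Y) (hessQhat K h Z Y θ) θ := by
  have hsum : HasFDerivAt
      (fun θ : EuclideanSpace ℝ (Fin p) =>
        ∑ i, (cdfK K (((inner ℝ (Z i) θ : ℝ) - Y i) / h) - τ) • innerSL ℝ (Z i))
      (∑ i, ((K (((inner ℝ (Z i) θ : ℝ) - Y i) / h) / h) • innerSL ℝ (Z i)).smulRight
        (innerSL ℝ (Z i))) θ := by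
    refine HasFDerivAt.fun_sum fun i _ => ?_
    have hinner : HasFDerivAt (fun θ : EuclideanSpace ℝ (Fin p) =>
        ((inner ℝ (Z i) θ : ℝ) - Y i) / h) ((1 / h) • innerSL ℝ (Z i)) θ := by
      have h0 : HasFDerivAt (fun θ : EuclideanSpace ℝ (Fin p) => (inner ℝ (Z i) θ : ℝ) - Y i)
          (innerSL ℝ (Z i)) θ := (innerSL ℝ (Z i)).hasFDerivAt.sub_const (Y i)
      have h1 := h0.const_mul (1 / h)
      have heq : (fun θ : EuclideanSpace ℝ (Fin p) => ((inner ℝ (Z i) θ : ℝ) - Y i) / h)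
          = fun θ : EuclideanSpace ℝ (Fin p) => (1 / h) * ((inner ℝ (Z i) θ : ℝ) - Y i) := by
        funext θ; ring
      rw [heq]
      exact h1
    have hc := (hasDerivAt_cdfK hKcont hKi
      (((inner ℝ (Z i) θ : ℝ) - Y i) / h)).comp_hasFDerivAt θ hinner
    have hc2 := (hc.sub_const τ).smul_const (innerSL ℝ (Z i))
    have hkey : (K (((inner ℝ (Z i) θ : ℝ) - Y i) / h) • (1 / h) • innerSL ℝ (Z i)).smulRight
          (innerSL ℝ (Z i))
        = ((K (((inner ℝ (Z i) θ : ℝ) - Y i) / h) / h) • innerSL ℝ (Z i)).smulRight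
          (innerSL ℝ (Z i)) := by
      rw [smul_smul, mul_one_div]
    rw [← hkey]
    exact hc2
  have hfinal := hsum.const_smul (1 / (n : ℝ))
  have := hess_eq (K := K) hh Z Y θ
  unfold gradQhat
  rw [← this]
  exact hfinal

lemma smoothedLoss_cvx {τ h : ℝ} {K : ℝ → ℝ} (hτ0 : 0 < τ) (hτ1 : τ < 1) (hh : 0 < h)
    (hKcont : Continuous K) (hKnonneg : ∀ t, 0 ≤ K t) (hKi : Integrable K)
    (hζ1 : Integrable (fun t => |t| * K t)) {r1 r2 a b : ℝ}
    (ha : 0 ≤ a) (hb : 0 ≤ b) (hab : a + b = 1) :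
    smoothedLoss τ K h (a * r1 + b * r2)
      ≤ a * smoothedLoss τ K h r1 + b * smoothedLoss τ K h r2 := by
  rw [smoothedLoss_eq hh, smoothedLoss_eq hh, smoothedLoss_eq hh]
  have hint1 := integrable_rho_kernel hτ0 hτ1 hh hKcont hKnonneg hKi hζ1 r1
  have hint2 := integrable_rho_kernel hτ0 hτ1 hh hKcont hKnonneg hKi hζ1 r2
  have hint0 := integrable_rho_kernel hτ0 hτ1 hh hKcont hKnonneg hKi hζ1 (a * r1 + b * r2)
  have hle : ∀ u, rho τ ((a * r1 + b * r2) + h * u) * K u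
      ≤ a * (rho τ (r1 + h * u) * K u) + b * (rho τ (r2 + h * u) * K u) := by
    intro u
    have harg : (a * r1 + b * r2) + h * u = a * (r1 + h * u) + b * (r2 + h * u) := by
      linear_combination (-(h * u)) * hab
    rw [harg]
    have hcv := rho_convex hτ0 hτ1 (x := r1 + h * u) (y := r2 + h * u) ha hb hab
    have := mul_le_mul_of_nonneg_right hcv (hKnonneg u)
    nlinarith [this]
  calc (∫ u, rho τ ((a * r1 + b * r2) + h * u) * K u)
      ≤ ∫ u, (a * (rho τ (r1 + h * u) * K u) + b * (rho τ (r2 + h * u) * K u)) :=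
        integral_mono hint0 ((hint1.const_mul a).add (hint2.const_mul b)) hle
    _ = a * (∫ u, rho τ (r1 + h * u) * K u) + b * ∫ u, rho τ (r2 + h * u) * K u := by
        rw [integral_add (hint1.const_mul a) (hint2.const_mul b), integral_const_mul,
          integral_const_mul]

/-! ### Main theorem -/

/-- for `τ ∈ (0,1)`, `h > 0`, a continuous nonnegative kernel `K`
with `∫ K = 1` and finite first moment, and data `(Z_i, Y_i)`, the smoothed
empirical quantile objective `Q̂_h` is twice differentiable on `ℝ^p` with
Hessian `∇²Q̂_h(θ) = (1/(nh)) ∑ᵢ K((⟨Z_i, θ⟩ − Y_i)/h) Z_i Z_iᵀ`; this matrix is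
positive semidefinite for every `θ`, and consequently `Q̂_h` is convex. -/
theorem stmt4 (τ : ℝ) (hτ : τ ∈ Set.Ioo (0 : ℝ) 1)
    (h : ℝ) (hh : 0 < h)
    (K : ℝ → ℝ) (hKcont : Continuous K) (hKnonneg : ∀ t, 0 ≤ K t)
    (hKint : ∫ t, K t = 1)
    (hζ1 : Integrable (fun t => |t| * K t))
    (p n : ℕ) (hn : 0 < n)
    (Z : Fin n → EuclideanSpace ℝ (Fin p)) (Y : Fin n → ℝ) :
    Differentiable ℝ (Qhat τ K h Z Y) ∧
      (∀ θ : EuclideanSpace ℝ (Fin p),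
        HasFDerivAt (fderiv ℝ (Qhat τ K h Z Y)) (hessQhat K h Z Y θ) θ) ∧
      (∀ (θ v : EuclideanSpace ℝ (Fin p)), 0 ≤ hessQhat K h Z Y θ v v) ∧
      ConvexOn ℝ Set.univ (Qhat τ K h Z Y) := by
  obtain ⟨hτ0, hτ1⟩ := hτ
  have hKi : Integrable K := by
    by_contra hcon
    rw [integral_undef hcon] at hKint
    norm_num at hKint
  have hQ : ∀ θ, HasFDerivAt (Qhat τ K h Z Y) (gradQhat τ K h Z Y θ) θ :=
    fun θ => hasFDerivAt_Qhat hτ0 hτ1 hh hKcont hKnonneg hKi hζ1 hKint Z Y θ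
  have hfd : fderiv ℝ (Qhat τ K h Z Y) = gradQhat τ K h Z Y :=
    funext fun θ => (hQ θ).fderiv
  refine ⟨fun θ => (hQ θ).differentiableAt, ?_, ?_, ?_⟩
  · intro θ
    rw [hfd]
    exact hasFDerivAt_gradQhat hh hKcont hKi Z Y θ
  · intro θ v
    unfold hessQhat
    simp only [ContinuousLinearMap.smul_apply, ContinuousLinearMap.sum_apply,
      ContinuousLinearMap.smulRight_apply, ContinuousLinearMap.coe_smul', Pi.smul_apply,
      smul_eq_mul]
    apply mul_nonneg
    · positivity
    · refine Finset.sum_nonneg fun i _ => ?_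
      exact mul_nonneg (hKnonneg _) (mul_self_nonneg _)
  · refine ⟨convex_univ, fun θ1 _ θ2 _ a b ha hb hab => ?_⟩
    have key : ∀ i, smoothedLoss τ K h (Y i - (inner ℝ (Z i) (a • θ1 + b • θ2) : ℝ))
        ≤ a * smoothedLoss τ K h (Y i - (inner ℝ (Z i) θ1 : ℝ))
          + b * smoothedLoss τ K h (Y i - (inner ℝ (Z i) θ2 : ℝ)) := by
      intro i
      have harg : Y i - (inner ℝ (Z i) (a • θ1 + b • θ2) : ℝ)
          = a * (Y i - (inner ℝ (Z i) θ1 : ℝ)) + b * (Y i - (inner ℝ (Z i) θ2 : ℝ)) := by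
        rw [inner_add_right, real_inner_smul_right, real_inner_smul_right]
        linear_combination (-(Y i)) * hab
      rw [harg]
      exact smoothedLoss_cvx hτ0 hτ1 hh hKcont hKnonneg hKi hζ1 ha hb hab
    have hsum := Finset.sum_le_sum fun i (_ : i ∈ Finset.univ) => key i
    unfold Qhat
    have hpos : (0:ℝ) ≤ 1 / (n : ℝ) := by positivity
    calc (1 / (n : ℝ)) * ∑ i, smoothedLoss τ K h (Y i - (inner ℝ (Z i) (a • θ1 + b • θ2) : ℝ))
        ≤ (1 / (n : ℝ)) * ∑ i, (a * smoothedLoss τ K h (Y i - (inner ℝ (Z i) θ1 : ℝ))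
            + b * smoothedLoss τ K h (Y i - (inner ℝ (Z i) θ2 : ℝ))) :=
          mul_le_mul_of_nonneg_left hsum hpos
      _ = a • ((1 / (n : ℝ)) * ∑ i, smoothedLoss τ K h (Y i - (inner ℝ (Z i) θ1 : ℝ)))
          + b • ((1 / (n : ℝ)) * ∑ i, smoothedLoss τ K h (Y i - (inner ℝ (Z i) θ2 : ℝ))) := by
          simp only [smul_eq_mul]
          rw [Finset.sum_add_distrib, ← Finset.mul_sum, ← Finset.mul_sum]
          ring
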